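/- arXiv:0804.4503 — 2 statements merged into one kernel-verified Lean document; each statement's English description precedes it below -/
import Mathlib

section
/- Fix N ≥ 1, s ≥ 1, α̃ > 0, β ≥ 0, and let F : ({−1,1}^N)^s → ℝ be any function of s replica configurations. Then for every t ∈ (0,1), the quenched replica average ⟨F⟩_t = E_t[Ω_t(F)] is differentiable in t with d⟨F⟩_t/dt = 2α̃ · ( E_t[ (1/N) Σ_{i₀∈Fin N} Ω_t(F·exp(β Σ_{a=1}^s σ_{i₀}^a)) / (ω_t(exp(β σ_{i₀})))^s ] − ⟨F⟩_t ). -/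
open scoped BigOperators

/-- The set of spin values `{-1, 1}` as a finite subset of `ℝ`. -/
noncomputable abbrev SpinVal : Finset ℝ := {-1, 1}

/-- Spin configurations on `n` sites: maps `Fin n → ℝ` taking values in `{-1,1}`. -/
abbrev Conf (n : ℕ) := Fin n → SpinVal

/-- Hamiltonian of the diluted ferromagnet for the disorder realization `(k, b)`:
`H(σ) = -Σ_{ν<k} σ_{(bν).1} σ_{(bν).2}`. -/
noncomputable def Hdil {n k : ℕ} (b : Fin k → Fin n × Fin n) (σ : Conf n) : ℝ :=
  - ∑ ν : Fin k, (σ (b ν).1 : ℝ) * (σ (b ν).2 : ℝ)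

/-- Partition function of the diluted ferromagnet at inverse temperature `β`. -/
noncomputable def Zdil (n : ℕ) (β : ℝ) {k : ℕ} (b : Fin k → Fin n × Fin n) : ℝ :=
  ∑ σ : Conf n, Real.exp (-β * Hdil b σ)

/-- Gibbs expectation `ω` of an observable for a fixed disorder realization. -/
noncomputable def gibbs (n : ℕ) (β : ℝ) {k : ℕ} (b : Fin k → Fin n × Fin n)
    (f : Conf n → ℝ) : ℝ :=
  (∑ σ : Conf n, f σ * Real.exp (-β * Hdil b σ)) / Zdil n β b

/-- The Poisson probability mass function with mean `lam`. -/
noncomputable def poissonPMF (lam : ℝ) (k : ℕ) : ℝ :=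
  Real.exp (-lam) * lam ^ k / (Nat.factorial k : ℝ)

/-- Quenched expectation at connectivity `α` on `n` sites: the number of bonds `k` is
Poisson(αn) and the `2k` endpoints are i.i.d. uniform on the `n` sites. -/
noncomputable def quenched (n : ℕ) (α : ℝ)
    (F : (k : ℕ) → (Fin k → Fin n × Fin n) → ℝ) : ℝ :=
  ∑' k : ℕ, poissonPMF (α * n) k *
    ((∑ b : Fin k → Fin n × Fin n, F k b) / ((n : ℝ) ^ 2) ^ k)

/-- Boltzmann weight of the `t`-perturbed (cavity) system with realization
`(k, b, k', l)`: `exp(β Σ_ν σσ + β Σ_μ σ_{l μ})`. -/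
noncomputable def cavWeight (n : ℕ) (β : ℝ) {k k' : ℕ} (b : Fin k → Fin n × Fin n)
    (l : Fin k' → Fin n) (σ : Conf n) : ℝ :=
  Real.exp (β * ∑ ν : Fin k, (σ (b ν).1 : ℝ) * (σ (b ν).2 : ℝ)
    + β * ∑ μ : Fin k', (σ (l μ) : ℝ))

/-- Partition function of the `t`-perturbed (cavity) system. -/
noncomputable def Zcav (n : ℕ) (β : ℝ) {k k' : ℕ} (b : Fin k → Fin n × Fin n)
    (l : Fin k' → Fin n) : ℝ :=
  ∑ σ : Conf n, cavWeight n β b l σ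

/-- Gibbs expectation `ω_t` of the `t`-perturbed (cavity) system at fixed realization. -/
noncomputable def gibbsCav (n : ℕ) (β : ℝ) {k k' : ℕ} (b : Fin k → Fin n × Fin n)
    (l : Fin k' → Fin n) (f : Conf n → ℝ) : ℝ :=
  (∑ σ : Conf n, f σ * cavWeight n β b l σ) / Zcav n β b l

/-- Quenched expectation `E_t` of the `t`-perturbed system at connectivity `αt`:
`k` is Poisson(αt·n), `k'` is Poisson(2·αt·t), and all indices are i.i.d. uniform. -/
noncomputable def quenchedCav (n : ℕ) (αt t : ℝ)
    (F : (k : ℕ) → (Fin k → Fin n × Fin n) → (k' : ℕ) → (Fin k' → Fin n) → ℝ) : ℝ :=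
  ∑' k : ℕ, ∑' k' : ℕ, poissonPMF (αt * n) k * poissonPMF (2 * αt * t) k' *
    ((∑ b : Fin k → Fin n × Fin n, ∑ l : Fin k' → Fin n, F k b k' l) /
      (((n : ℝ) ^ 2) ^ k * (n : ℝ) ^ k'))

/-- The cavity function `Ψ_n(α̃, β; t) = E_t[ln Z_{n,t}] - E[ln Z_n(α̃, β)]`. -/
noncomputable def Psi (n : ℕ) (αt β t : ℝ) : ℝ :=
  quenchedCav n αt t (fun _ b _ l => Real.log (Zcav n β b l))
    - quenched n αt (fun _ b => Real.log (Zdil n β b))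

/-- Replica Gibbs expectation `Ω_t = ω_t ⊗ ⋯ ⊗ ω_t` (`s` factors, same realization)
of a function of `s` replica configurations. -/
noncomputable def OmegaCav (n : ℕ) (β : ℝ) (s : ℕ) {k k' : ℕ}
    (b : Fin k → Fin n × Fin n) (l : Fin k' → Fin n)
    (F : (Fin s → Conf n) → ℝ) : ℝ :=
  (∑ σs : Fin s → Conf n, F σs * ∏ a : Fin s, cavWeight n β b l (σs a))
    / (Zcav n β b l) ^ s

/-!
Conditionally on the bonds, `E_t` is a Poisson(`2α̃t`) mixture over the number `k'` of field
sites, and a Poisson mixture `x ↦ ∑ P(λx)(k) D_k = e^{-λx} ∑ D_k (λx)^k / k!` of a bounded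
sequence has derivative `λ (∑ P(λx)(k) D_{k+1} - ∑ P(λx)(k) D_k)`: differentiating in `t`
adds one field site. A new field site `i₀` multiplies every Boltzmann weight by
`exp(β σ_{i₀})`, so the replica expectation with the extra site is
`Ω_t(F e^{β Σ_a σ^a_{i₀}}) / ω_t(e^{β σ_{i₀}})^s`, and averaging over the uniform site `i₀`
gives the first term. The bound `|Ω_t(F)| ≤ Σ |F|` justifies exchanging the two Poisson sums.
-/

open Finset Nat

section ExponentialSeries

lemma summable_mul_pow_div_factorial {D : ℕ → ℝ} {M : ℝ} (hD : ∀ k, |D k| ≤ M) (y : ℝ) :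
    Summable fun k => D k * (y ^ k / k !) := by
  refine .of_norm_bounded ((Real.summable_pow_div_factorial |y|).mul_left M) fun k => ?_
  rw [norm_mul, Real.norm_eq_abs, norm_div, norm_pow, Real.norm_eq_abs, RCLike.norm_natCast]
  gcongr
  exact hD k

lemma hasDerivAt_pow_succ_div_factorial (k : ℕ) (y : ℝ) :
    HasDerivAt (fun z : ℝ => z ^ (k + 1) / (k + 1) !) (y ^ k / k !) y := by
  refine ((hasDerivAt_pow (k + 1) y).div_const ((k + 1) ! : ℝ)).congr_deriv ?_
  rw [Nat.factorial_succ]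
  push_cast
  field_simp

lemma hasDerivAt_tsum_mul_pow_div_factorial {D : ℕ → ℝ} {M : ℝ} (hD : ∀ k, |D k| ≤ M)
    (y : ℝ) :
    HasDerivAt (fun z => ∑' k, D k * (z ^ k / k !)) (∑' k, D (k + 1) * (y ^ k / k !)) y := by
  set r := |y| + 1
  have hy : y ∈ Set.Ioo (-r) r := abs_lt.mp (lt_add_one _)
  have htail : HasDerivAt (fun z => ∑' k, D (k + 1) * (z ^ (k + 1) / (k + 1) !))
      (∑' k, D (k + 1) * (y ^ k / k !)) y := by
    refine hasDerivAt_tsum_of_isPreconnected ((Real.summable_pow_div_factorial r).mul_left M)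
      isOpen_Ioo isPreconnected_Ioo
      (fun k z _ => (hasDerivAt_pow_succ_div_factorial k z).const_mul _) (fun k z hz => ?_) hy ?_ hy
    · rw [norm_mul, Real.norm_eq_abs, norm_div, norm_pow, Real.norm_eq_abs, RCLike.norm_natCast]
      gcongr
      · exact (abs_nonneg _).trans (hD 0)
      · exact hD _
      · exact abs_lt.mpr hz |>.le
    · exact (summable_nat_add_iff 1).mpr (summable_mul_pow_div_factorial hD y)
  have hsplit : (fun z => ∑' k, D k * (z ^ k / k !))
      = fun z => D 0 + ∑' k, D (k + 1) * (z ^ (k + 1) / (k + 1) !) := by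
    funext z
    rw [(summable_mul_pow_div_factorial hD z).tsum_eq_zero_add]
    simp
  rw [hsplit]
  exact htail.const_add _

end ExponentialSeries

section Poisson

lemma poissonPMF_eq_mul (lam : ℝ) (k : ℕ) :
    poissonPMF lam k = Real.exp (-lam) * (lam ^ k / k !) :=
  mul_div_assoc _ _ _

lemma summable_norm_poissonPMF (lam : ℝ) : Summable fun k => ‖poissonPMF lam k‖ := by
  refine ((Real.summable_pow_div_factorial |lam|).mul_left (Real.exp (-lam))).congr fun k => ?_
  rw [poissonPMF_eq_mul, norm_mul, Real.norm_of_nonneg (Real.exp_pos _).le, norm_div, norm_pow,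
    Real.norm_eq_abs, RCLike.norm_natCast]

lemma tsum_poissonPMF_mul (D : ℕ → ℝ) (lam : ℝ) :
    ∑' k, poissonPMF lam k * D k = Real.exp (-lam) * ∑' k, D k * (lam ^ k / k !) := by
  rw [← tsum_mul_left]
  exact tsum_congr fun k => by rw [poissonPMF_eq_mul]; ring

lemma hasDerivAt_tsum_poissonPMF_mul {D : ℕ → ℝ} {M : ℝ} (hD : ∀ k, |D k| ≤ M) (lam x : ℝ) :
    HasDerivAt (fun y => ∑' k, poissonPMF (lam * y) k * D k)
      (lam * (∑' k, poissonPMF (lam * x) k * D (k + 1) - ∑' k, poissonPMF (lam * x) k * D k))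
      x := by
  simp only [tsum_poissonPMF_mul]
  have hlin : HasDerivAt (fun y => lam * y) lam x := by
    simpa using (hasDerivAt_id x).const_mul lam
  have hexp : HasDerivAt (fun y => Real.exp (-(lam * y))) (Real.exp (-(lam * x)) * -lam) x :=
    hlin.neg.exp
  have hser : HasDerivAt (fun y => ∑' k, D k * ((lam * y) ^ k / k !))
      ((∑' k, D (k + 1) * ((lam * x) ^ k / k !)) * lam) x :=
    (hasDerivAt_tsum_mul_pow_div_factorial hD (lam * x)).comp x hlin
  exact (hexp.mul hser).congr_deriv (by ring)

lemma tsum_tsum_mul_comm {c p : ℕ → ℝ} (hc : Summable fun k => ‖c k‖)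
    (hp : Summable fun j => ‖p j‖) {R : ℕ → ℕ → ℝ} {M : ℝ} (hR : ∀ k j, |R k j| ≤ M) :
    ∑' k, ∑' j, c k * p j * R k j = ∑' j, p j * ∑' k, c k * R k j := by
  have hsum : Summable (Function.uncurry fun k j => c k * p j * R k j) := by
    refine .of_norm_bounded ((hc.mul_norm hp).mul_right M) fun ⟨k, j⟩ => ?_
    rw [Function.uncurry_apply_pair, norm_mul (c k * p j)]
    exact mul_le_mul_of_nonneg_left (hR k j) (norm_nonneg _)
  rw [← hsum.tsum_comm]
  exact tsum_congr fun j => by rw [← tsum_mul_left]; exact tsum_congr fun k => by ring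

lemma abs_tsum_mul_le {c : ℕ → ℝ} (hc : Summable fun k => ‖c k‖) {R : ℕ → ℝ} {M : ℝ}
    (hR : ∀ k, |R k| ≤ M) : |∑' k, c k * R k| ≤ (∑' k, ‖c k‖) * M := by
  rw [← Real.norm_eq_abs, ← tsum_mul_right]
  refine tsum_of_norm_bounded (hc.mul_right M).hasSum fun k => ?_
  rw [norm_mul]
  exact mul_le_mul_of_nonneg_left (hR k) (norm_nonneg _)

end Poisson

section QuenchedAverage

variable {n : ℕ}

noncomputable def disorderAvg
    (G : (k : ℕ) → (Fin k → Fin n × Fin n) → (k' : ℕ) → (Fin k' → Fin n) → ℝ) (k k' : ℕ) : ℝ :=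
  (∑ b : Fin k → Fin n × Fin n, ∑ l : Fin k' → Fin n, G k b k' l) /
    (((n : ℝ) ^ 2) ^ k * (n : ℝ) ^ k')

noncomputable def addFieldSite
    (G : (k : ℕ) → (Fin k → Fin n × Fin n) → (k' : ℕ) → (Fin k' → Fin n) → ℝ) :
    (k : ℕ) → (Fin k → Fin n × Fin n) → (k' : ℕ) → (Fin k' → Fin n) → ℝ :=
  fun k b k' l => (1 / (n : ℝ)) * ∑ i₀ : Fin n, G k b (k' + 1) (Fin.cons i₀ l)

variable {G : (k : ℕ) → (Fin k → Fin n × Fin n) → (k' : ℕ) → (Fin k' → Fin n) → ℝ}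

lemma quenchedCav_eq_tsum_disorderAvg (αt t : ℝ) :
    quenchedCav n αt t G =
      ∑' k, ∑' k', poissonPMF (αt * n) k * poissonPMF (2 * αt * t) k' * disorderAvg G k k' :=
  rfl

lemma abs_disorderAvg_le {M : ℝ} (hG : ∀ k b k' l, |G k b k' l| ≤ M) (k k' : ℕ) :
    |disorderAvg G k k'| ≤ M := by
  have hM : 0 ≤ M := (abs_nonneg _).trans (hG 0 Fin.elim0 0 Fin.elim0)
  have hsum : |∑ b : Fin k → Fin n × Fin n, ∑ l : Fin k' → Fin n, G k b k' l|
      ≤ M * (((n : ℝ) ^ 2) ^ k * (n : ℝ) ^ k') := by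
    calc _ ≤ ∑ _b : Fin k → Fin n × Fin n, ∑ _l : Fin k' → Fin n, M :=
          (abs_sum_le_sum_abs _ _).trans <| sum_le_sum fun b _ =>
            (abs_sum_le_sum_abs _ _).trans <| sum_le_sum fun l _ => hG k b k' l
      _ = _ := by
          simp only [sum_const, Finset.card_univ, Fintype.card_pi, Fintype.card_fin, prod_const,
            nsmul_eq_mul, cast_pow, Fintype.card_prod, cast_mul]
          ring
  have hcard : 0 ≤ ((n : ℝ) ^ 2) ^ k * (n : ℝ) ^ k' := by positivity
  rw [disorderAvg, abs_div, abs_of_nonneg hcard]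
  exact div_le_of_le_mul₀ hcard hM hsum

lemma sum_fin_succ_fun {α : Type*} {k : ℕ} [Fintype α] (f : (Fin (k + 1) → α) → ℝ) :
    ∑ l : Fin (k + 1) → α, f l = ∑ i : α, ∑ l : Fin k → α, f (Fin.cons i l) := by
  rw [← (Fin.consEquiv fun _ => α).sum_comp, Fintype.sum_prod_type]
  rfl

lemma disorderAvg_addFieldSite (k k' : ℕ) :
    disorderAvg (addFieldSite G) k k' = disorderAvg G k (k' + 1) := by
  simp only [disorderAvg, addFieldSite, ← mul_sum]
  simp only [sum_fin_succ_fun (G k _ (k' + 1)), sum_comm (γ := Fin n), pow_succ]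
  ring

theorem hasDerivAt_quenchedCav {M : ℝ} (hG : ∀ k b k' l, |G k b k' l| ≤ M) (αt t : ℝ) :
    HasDerivAt (fun t' => quenchedCav n αt t' G)
      (2 * αt * (quenchedCav n αt t (addFieldSite G) - quenchedCav n αt t G)) t := by
  have hc := summable_norm_poissonPMF (αt * n)
  set D := fun k' => ∑' k, poissonPMF (αt * n) k * disorderAvg G k k'
  have hD : ∀ k', |D k'| ≤ (∑' k, ‖poissonPMF (αt * n) k‖) * M := fun k' =>
    abs_tsum_mul_le hc fun k => abs_disorderAvg_le hG k k'
  have hQ : ∀ t', quenchedCav n αt t' G = ∑' k', poissonPMF (2 * αt * t') k' * D k' := fun t' =>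
    (quenchedCav_eq_tsum_disorderAvg αt t').trans
      (tsum_tsum_mul_comm hc (summable_norm_poissonPMF _) (abs_disorderAvg_le hG))
  have hQshift : quenchedCav n αt t (addFieldSite G)
      = ∑' k', poissonPMF (2 * αt * t) k' * D (k' + 1) := by
    rw [quenchedCav_eq_tsum_disorderAvg]
    simp only [disorderAvg_addFieldSite]
    exact tsum_tsum_mul_comm hc (summable_norm_poissonPMF _)
      fun k k' => abs_disorderAvg_le hG k (k' + 1)
  simp only [hQ, hQshift]
  exact hasDerivAt_tsum_poissonPMF_mul hD (2 * αt) t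

end QuenchedAverage

section Cavity

variable {n : ℕ} (β : ℝ) {k k' : ℕ} (b : Fin k → Fin n × Fin n) (l : Fin k' → Fin n)

instance : Nonempty SpinVal := ⟨⟨1, by simp⟩⟩

lemma cavWeight_pos (σ : Conf n) : 0 < cavWeight n β b l σ :=
  Real.exp_pos _

lemma Zcav_pos : 0 < Zcav n β b l :=
  sum_pos (fun σ _ => cavWeight_pos β b l σ) univ_nonempty

lemma cavWeight_cons (i₀ : Fin n) (σ : Conf n) :
    cavWeight n β b (Fin.cons i₀ l) σ = cavWeight n β b l σ * Real.exp (β * (σ i₀ : ℝ)) := by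
  rw [cavWeight, cavWeight, ← Real.exp_add, Fin.sum_univ_succ]
  simp only [Fin.cons_zero, Fin.cons_succ]
  ring_nf

lemma Zcav_cons (i₀ : Fin n) :
    Zcav n β b (Fin.cons i₀ l) =
      gibbsCav n β b l (fun σ => Real.exp (β * (σ i₀ : ℝ))) * Zcav n β b l := by
  rw [gibbsCav, div_mul_cancel₀ _ (Zcav_pos β b l).ne', Zcav]
  exact sum_congr rfl fun σ _ => by rw [cavWeight_cons, mul_comm]

lemma OmegaCav_cons {s : ℕ} (i₀ : Fin n) (F : (Fin s → Conf n) → ℝ) :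
    OmegaCav n β s b (Fin.cons i₀ l) F =
      OmegaCav n β s b l (fun σs => F σs * Real.exp (β * ∑ a : Fin s, (σs a i₀ : ℝ)))
        / (gibbsCav n β b l (fun σ => Real.exp (β * (σ i₀ : ℝ)))) ^ s := by
  have hweight : ∀ σs : Fin s → Conf n,
      F σs * ∏ a, cavWeight n β b (Fin.cons i₀ l) (σs a)
        = F σs * Real.exp (β * ∑ a, (σs a i₀ : ℝ)) * ∏ a, cavWeight n β b l (σs a) := by
    intro σs
    simp only [cavWeight_cons, prod_mul_distrib, ← Real.exp_sum, mul_sum]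
    ring
  rw [OmegaCav, OmegaCav, Zcav_cons, sum_congr rfl fun σs _ => hweight σs]
  ring

lemma abs_OmegaCav_le {s : ℕ} (F : (Fin s → Conf n) → ℝ) :
    |OmegaCav n β s b l F| ≤ ∑ σs, |F σs| := by
  have hZ : 0 < Zcav n β b l ^ s := pow_pos (Zcav_pos β b l) s
  have hweight : ∀ σ, cavWeight n β b l σ ≤ Zcav n β b l := fun σ =>
    single_le_sum (fun σ _ => (cavWeight_pos β b l σ).le) (mem_univ σ)
  have hprod : ∀ σs : Fin s → Conf n, ∏ a, cavWeight n β b l (σs a) ≤ Zcav n β b l ^ s :=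
    fun σs => (prod_le_prod (fun a _ => (cavWeight_pos β b l _).le) fun a _ =>
      hweight (σs a)).trans_eq (by simp)
  rw [OmegaCav, abs_div, abs_of_pos hZ, div_le_iff₀ hZ, sum_mul]
  refine (abs_sum_le_sum_abs _ _).trans (sum_le_sum fun σs _ => ?_)
  rw [abs_mul, abs_of_pos (prod_pos fun a _ => cavWeight_pos β b l _)]
  exact mul_le_mul_of_nonneg_left (hprod σs) (abs_nonneg _)

end Cavity

theorem streaming_equation_general (N : ℕ) (s : ℕ)
    (αt β : ℝ)
    (F : (Fin s → Conf N) → ℝ) (t : ℝ) :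
    HasDerivAt (fun t' : ℝ =>
        quenchedCav N αt t' (fun _ b _ l => OmegaCav N β s b l F))
      (2 * αt *
        (quenchedCav N αt t (fun _ b _ l =>
            (1 / (N : ℝ)) * ∑ i₀ : Fin N,
              OmegaCav N β s b l
                  (fun σs => F σs * Real.exp (β * ∑ a : Fin s, (σs a i₀ : ℝ)))
                / (gibbsCav N β b l (fun σ => Real.exp (β * (σ i₀ : ℝ)))) ^ s)
          - quenchedCav N αt t (fun _ b _ l => OmegaCav N β s b l F)))
      t := by
  have hcavity : addFieldSite (fun _ b _ l => OmegaCav N β s b l F) = fun _ b _ l =>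
      (1 / (N : ℝ)) * ∑ i₀ : Fin N,
        OmegaCav N β s b l (fun σs => F σs * Real.exp (β * ∑ a : Fin s, (σs a i₀ : ℝ)))
          / (gibbsCav N β b l (fun σ => Real.exp (β * (σ i₀ : ℝ)))) ^ s := by
    funext k b k' l
    simp only [addFieldSite, OmegaCav_cons]
  rw [← hcavity]
  exact hasDerivAt_quenchedCav (fun _ b _ l => abs_OmegaCav_le β b l F) αt t

/-- **Streaming equation for quenched replica observables (exact, un-expanded form).**
For any function `F` of `s` replica configurations and `t ∈ (0,1)`, the quenched replica
average `⟨F⟩_t = E_t[Ω_t(F)]` is differentiable in `t`, with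
`d⟨F⟩_t/dt = 2α̃·(E_t[(1/N) Σ_{i₀} Ω_t(F·exp(β Σ_a σ_{i₀}^a))/(ω_t(exp(β σ_{i₀})))^s] − ⟨F⟩_t)`. -/
theorem streaming_equation (N : ℕ) (hN : 1 ≤ N) (s : ℕ) (hs : 1 ≤ s)
    (αt β : ℝ) (hαt : 0 < αt) (hβ : 0 ≤ β)
    (F : (Fin s → Conf N) → ℝ) (t : ℝ) (ht : t ∈ Set.Ioo (0 : ℝ) 1) :
    HasDerivAt (fun t' : ℝ =>
        quenchedCav N αt t' (fun _ b _ l => OmegaCav N β s b l F))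
      (2 * αt *
        (quenchedCav N αt t (fun _ b _ l =>
            (1 / (N : ℝ)) * ∑ i₀ : Fin N,
              OmegaCav N β s b l
                  (fun σs => F σs * Real.exp (β * ∑ a : Fin s, (σs a i₀ : ℝ)))
                / (gibbsCav N β b l (fun σ => Real.exp (β * (σ i₀ : ℝ)))) ^ s)
          - quenchedCav N αt t (fun _ b _ l => OmegaCav N β s b l F)))
      t :=
  streaming_equation_general N s αt β F t
end

section
/- Fix N ≥ 1, α > 1/2, and β ≥ 0 with θ = tanh β. Then ∂A_N(α,β)/∂β = αθ − α·Σ_{m=1}^∞ (−1)^m (1 − θ²) θ^{m−1} ⟨q²_{1,…,m}⟩, where the series converges absolutely and ⟨q²_{1,…,m}⟩ = E[(1/N²) Σ_{i,j ∈ Fin N} (ω(σ_i σ_j))^m] is the quenched replica average of the squared m-replica multi-overlap. -/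
/-!
`A_N` is a Poisson mixture of log-partition functions, so `∂_β A_N` is the quenched average of
`ω(-H) = Σ_ν ω(σ_{bν.1} σ_{bν.2})`; differentiating under the sum is licit since `|ω(-H)| ≤ k`
and the Poisson law has a first moment. The bonds are exchangeable, and Poisson size biasing
`k p_k = αN p_{k-1}` turns this into `α N` times the quenched average of `ω'(σᵢσⱼ)`, where `ω'`
carries one extra uniform bond `(i, j)`. That bond multiplies the Boltzmann weight by
`cosh β (1 + θ σᵢσⱼ)`, whence `ω'(σᵢσⱼ) = (w + θ)/(1 + θ w)` with `w = ω(σᵢσⱼ)`. Expanding in the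
geometric series in `-θ w` and exchanging the sums, dominated by `(1 - θ²)|θ|^j`, gives the
multi-overlap series.
-/

open scoped BigOperators

open Finset Real

section Spins

variable {n k : ℕ}

lemma abs_spinVal (s : SpinVal) : |(s : ℝ)| = 1 := by
  have h := s.2
  simp only [SpinVal, mem_insert, mem_singleton] at h
  rcases h with h | h <;> simp [h]

lemma abs_spin_mul_spin (σ : Conf n) (i j : Fin n) : |(σ i : ℝ) * σ j| = 1 := by
  rw [abs_mul, abs_spinVal, abs_spinVal, one_mul]

lemma exp_mul_of_abs_eq_one {s : ℝ} (hs : |s| = 1) (β : ℝ) :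
    exp (β * s) = cosh β + s * sinh β := by
  rcases (abs_eq zero_le_one).1 hs with rfl | rfl
  · simp [cosh_add_sinh]
  · simp [← cosh_sub_sinh, sub_eq_add_neg]

lemma Hdil_cons (x : Fin n × Fin n) (b : Fin k → Fin n × Fin n) (σ : Conf n) :
    Hdil (Fin.cons x b) σ = -((σ x.1 : ℝ) * σ x.2) + Hdil b σ := by
  simp only [Hdil, Fin.sum_univ_succ, Fin.cons_zero, Fin.cons_succ]
  ring

lemma abs_Hdil_le (b : Fin k → Fin n × Fin n) (σ : Conf n) : |Hdil b σ| ≤ k := by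
  rw [Hdil, abs_neg]
  calc |∑ ν, (σ (b ν).1 : ℝ) * σ (b ν).2|
      ≤ ∑ ν, |(σ (b ν).1 : ℝ) * σ (b ν).2| := abs_sum_le_sum_abs _ _
    _ = k := by simp only [abs_spin_mul_spin, sum_const, card_univ, Fintype.card_fin,
      nsmul_eq_mul, mul_one]

lemma Hdil_comp_perm (b : Fin k → Fin n × Fin n) (e : Equiv.Perm (Fin k)) (σ : Conf n) :
    Hdil (b ∘ e) σ = Hdil b σ := by
  simp only [Hdil, Function.comp_apply, Equiv.sum_comp e fun ν => (σ (b ν).1 : ℝ) * σ (b ν).2]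

end Spins

section Gibbs

variable {n k : ℕ} (β : ℝ) (b : Fin k → Fin n × Fin n)

lemma Zdil_pos : 0 < Zdil n β b :=
  sum_pos (fun σ _ => exp_pos _) ⟨fun _ => ⟨1, by simp⟩, mem_univ _⟩

lemma gibbs_const (c : ℝ) : gibbs n β b (fun _ => c) = c := by
  rw [gibbs, ← mul_sum, ← Zdil, mul_div_cancel_right₀ _ (Zdil_pos β b).ne']

lemma gibbs_sum {ι : Type*} (s : Finset ι) (f : ι → Conf n → ℝ) :
    gibbs n β b (fun σ => ∑ ν ∈ s, f ν σ) = ∑ ν ∈ s, gibbs n β b (f ν) := by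
  simp only [gibbs, ← sum_div, sum_mul]
  rw [sum_comm]

lemma abs_gibbs_le {f : Conf n → ℝ} {C : ℝ} (hf : ∀ σ, |f σ| ≤ C) : |gibbs n β b f| ≤ C := by
  have hZ := Zdil_pos β b
  rw [gibbs, abs_div, abs_of_pos hZ, div_le_iff₀ hZ, Zdil, mul_sum]
  refine (abs_sum_le_sum_abs _ _).trans (sum_le_sum fun σ _ => ?_)
  rw [abs_mul, abs_of_pos (exp_pos _)]
  exact mul_le_mul_of_nonneg_right (hf σ) (exp_pos _).le

lemma abs_gibbs_spin_mul_spin_le_one (i j : Fin n) :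
    |gibbs n β b (fun σ => (σ i : ℝ) * σ j)| ≤ 1 :=
  abs_gibbs_le β b fun σ => (abs_spin_mul_spin σ i j).le

lemma gibbs_comp_perm (e : Equiv.Perm (Fin k)) (f : Conf n → ℝ) :
    gibbs n β (b ∘ e) f = gibbs n β b f := by
  simp only [gibbs, Zdil, Hdil_comp_perm]

lemma hasDerivAt_log_Zdil :
    HasDerivAt (fun β' => log (Zdil n β' b)) (gibbs n β b fun σ => -Hdil b σ) β := by
  have hZ : HasDerivAt (fun β' => Zdil n β' b) (∑ σ, -Hdil b σ * exp (-β * Hdil b σ)) β :=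
    HasDerivAt.fun_sum fun σ _ => by
      simpa [mul_comm] using ((hasDerivAt_id β).neg.mul_const (Hdil b σ)).exp
  exact hZ.log (Zdil_pos β b).ne'

/-- The new bond contributes the factor `exp (β σᵢσⱼ) = cosh β + σᵢσⱼ sinh β`. -/
lemma sum_mul_exp_Hdil_cons (x : Fin n × Fin n) (f : Conf n → ℝ) :
    ∑ σ, f σ * exp (-β * Hdil (Fin.cons x b) σ) =
      cosh β * ∑ σ, f σ * exp (-β * Hdil b σ) +
        sinh β * ∑ σ, f σ * ((σ x.1 : ℝ) * σ x.2) * exp (-β * Hdil b σ) := by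
  simp only [mul_sum, ← sum_add_distrib]
  refine sum_congr rfl fun σ _ => ?_
  rw [Hdil_cons, show -β * (-((σ x.1 : ℝ) * σ x.2) + Hdil b σ) =
      β * ((σ x.1 : ℝ) * σ x.2) + -β * Hdil b σ by ring, exp_add,
    exp_mul_of_abs_eq_one (abs_spin_mul_spin σ x.1 x.2)]
  ring

lemma gibbs_cons (x : Fin n × Fin n) (f : Conf n → ℝ) :
    gibbs n β (Fin.cons x b) f =
      (gibbs n β b f + tanh β * gibbs n β b (fun σ => f σ * ((σ x.1 : ℝ) * σ x.2))) /
        (1 + tanh β * gibbs n β b (fun σ => (σ x.1 : ℝ) * σ x.2)) := by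
  have hZ := Zdil_pos β b
  have hcosh := (cosh_pos β).ne'
  have hZcons : Zdil n β (Fin.cons x b) = cosh β * Zdil n β b +
      sinh β * ∑ σ, (σ x.1 : ℝ) * σ x.2 * exp (-β * Hdil b σ) := by
    simpa [Zdil] using sum_mul_exp_Hdil_cons β b x (fun _ => 1)
  rw [gibbs, sum_mul_exp_Hdil_cons, hZcons, gibbs, gibbs, gibbs, tanh_eq_sinh_div_cosh]
  field_simp

lemma gibbs_cons_spin_mul_spin (x : Fin n × Fin n) :
    gibbs n β (Fin.cons x b) (fun σ => (σ x.1 : ℝ) * σ x.2) =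
      (gibbs n β b (fun σ => (σ x.1 : ℝ) * σ x.2) + tanh β) /
        (1 + tanh β * gibbs n β b (fun σ => (σ x.1 : ℝ) * σ x.2)) := by
  have hsq : ∀ σ : Conf n, (σ x.1 : ℝ) * σ x.2 * ((σ x.1 : ℝ) * σ x.2) = 1 := fun σ => by
    rw [← abs_mul_abs_self, abs_spin_mul_spin, one_mul]
  rw [gibbs_cons, funext hsq, gibbs_const, mul_one]

end Gibbs

section BondSymmetry

/-- Exchangeability of the bonds: every bond of a configuration can be moved to the front. -/
lemma sum_sum_apply_eq_smul_sum_cons {α M : Type*} [Fintype α] [AddCommMonoid M] {k : ℕ}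
    (F : (Fin (k + 1) → α) → α → M) (hF : ∀ b (e : Equiv.Perm (Fin (k + 1))), F (b ∘ e) = F b) :
    ∑ b, ∑ ν, F b (b ν) = (k + 1) • ∑ b : Fin k → α, ∑ x, F (Fin.cons x b) x := by
  have hfront : ∀ ν, ∑ b, F b (b ν) = ∑ b, F b (b 0) := fun ν => by
    have hinv : Function.Involutive fun b : Fin (k + 1) → α => b ∘ Equiv.swap 0 ν :=
      fun b => by ext; simp
    refine (Fintype.sum_bijective _ hinv.bijective _ _ fun b => ?_).symm
    simp [hF]
  rw [sum_comm, sum_congr rfl fun ν _ => hfront ν, sum_const, card_univ, Fintype.card_fin,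
    ← Fintype.sum_prod_type_right (f := fun p => F (Fin.cons p.1 p.2) p.1)]
  exact congrArg _ (Fintype.sum_equiv (Fin.consEquiv fun _ => α) _ _ fun _ => rfl).symm

lemma sum_gibbs_neg_Hdil_succ {n : ℕ} (β : ℝ) (k : ℕ) :
    ∑ b : Fin (k + 1) → Fin n × Fin n, gibbs n β b (fun σ => -Hdil b σ) =
      (k + 1) * ∑ b : Fin k → Fin n × Fin n, ∑ x,
        gibbs n β (Fin.cons x b) (fun σ => (σ x.1 : ℝ) * σ x.2) := by
  have hHdil : ∀ b : Fin (k + 1) → Fin n × Fin n, gibbs n β b (fun σ => -Hdil b σ) =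
      ∑ ν, gibbs n β b (fun σ => (σ (b ν).1 : ℝ) * σ (b ν).2) := fun b => by
    simp only [Hdil, neg_neg, gibbs_sum]
  simp only [hHdil]
  rw [sum_sum_apply_eq_smul_sum_cons (fun b x => gibbs n β b fun σ => (σ x.1 : ℝ) * σ x.2)
    fun b e => by ext x; exact gibbs_comp_perm β b e _, nsmul_eq_mul]
  push_cast
  rfl

end BondSymmetry

section Poisson

lemma poissonPMF_nonneg {lam : ℝ} (h : 0 ≤ lam) (k : ℕ) : 0 ≤ poissonPMF lam k := by
  unfold poissonPMF
  positivity

lemma hasSum_poissonPMF (lam : ℝ) : HasSum (poissonPMF lam) 1 := by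
  have h := (NormedSpace.expSeries_div_hasSum_exp lam).mul_left (exp (-lam))
  rw [← Real.exp_eq_exp_ℝ, ← exp_add, neg_add_cancel, exp_zero] at h
  have hpmf : poissonPMF lam = fun k => exp (-lam) * (lam ^ k / k.factorial) :=
    funext fun k => mul_div_assoc _ _ _
  rwa [hpmf]

lemma poissonPMF_succ_mul (lam : ℝ) (k : ℕ) :
    poissonPMF lam (k + 1) * (k + 1) = lam * poissonPMF lam k := by
  simp only [poissonPMF, Nat.factorial_succ, Nat.cast_mul, Nat.cast_succ]
  field_simp
  ring

lemma summable_poissonPMF_mul_cast (lam : ℝ) : Summable fun k => poissonPMF lam k * k := by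
  refine (summable_nat_add_iff 1).1 (((hasSum_poissonPMF lam).summable.mul_left lam).congr
    fun k => ?_)
  push_cast
  exact (poissonPMF_succ_mul lam k).symm

end Poisson

section Quenched

noncomputable def bondAvg (n k : ℕ) (F : (Fin k → Fin n × Fin n) → ℝ) : ℝ :=
  (∑ b, F b) / ((n : ℝ) ^ 2) ^ k

variable {n : ℕ} {α : ℝ}

lemma quenched_eq_tsum (F : (k : ℕ) → (Fin k → Fin n × Fin n) → ℝ) :
    quenched n α F = ∑' k, poissonPMF (α * n) k * bondAvg n k (F k) :=
  rfl

lemma card_bonds (n k : ℕ) : (Fintype.card (Fin k → Fin n × Fin n) : ℝ) = ((n : ℝ) ^ 2) ^ k := by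
  simp [sq]

lemma abs_sum_div_card_le {X : Type*} [Fintype X] {F : X → ℝ} {C : ℝ} (hC : 0 ≤ C)
    (hF : ∀ x, |F x| ≤ C) : |(∑ x, F x) / Fintype.card X| ≤ C := by
  rcases (Nat.cast_nonneg (α := ℝ) (Fintype.card X)).eq_or_lt with hX | hX
  · simp [← hX, hC]
  rw [abs_div, Nat.abs_cast, div_le_iff₀ hX]
  calc |∑ x, F x| ≤ ∑ x, |F x| := abs_sum_le_sum_abs _ _
    _ ≤ ∑ _x : X, C := sum_le_sum fun x _ => hF x
    _ = C * Fintype.card X := by rw [sum_const, card_univ, nsmul_eq_mul, mul_comm]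

lemma abs_bondAvg_le {k : ℕ} {F : (Fin k → Fin n × Fin n) → ℝ} {C : ℝ} (hC : 0 ≤ C)
    (hF : ∀ b, |F b| ≤ C) : |bondAvg n k F| ≤ C := by
  simpa only [bondAvg, card_bonds] using abs_sum_div_card_le hC hF

lemma bondAvg_const_sub (hn : n ≠ 0) {k : ℕ} (c : ℝ) (F : (Fin k → Fin n × Fin n) → ℝ) :
    bondAvg n k (fun b => c - F b) = c - bondAvg n k F := by
  have hpow : ((n : ℝ) ^ 2) ^ k ≠ 0 := by positivity
  rw [bondAvg, bondAvg, sum_sub_distrib, sum_const, card_univ, nsmul_eq_mul, card_bonds,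
    sub_div, mul_div_cancel_left₀ _ hpow]

lemma abs_poissonPMF_mul_bondAvg_le (hα : 0 ≤ α) {k : ℕ} {F : (Fin k → Fin n × Fin n) → ℝ}
    {C : ℝ} (hC : 0 ≤ C) (hF : ∀ b, |F b| ≤ C) :
    ‖poissonPMF (α * n) k * bondAvg n k F‖ ≤ poissonPMF (α * n) k * C := by
  have hp := poissonPMF_nonneg (by positivity : 0 ≤ α * n) k
  rw [Real.norm_eq_abs, abs_mul, abs_of_nonneg hp]
  exact mul_le_mul_of_nonneg_left (abs_bondAvg_le hC hF) hp

/-- The configuration without bonds forces `0 ≤ C`. -/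
lemma nonneg_of_forall_abs_le {F : (k : ℕ) → (Fin k → Fin n × Fin n) → ℝ} {C : ℝ}
    (hF : ∀ k b, |F k b| ≤ C) : 0 ≤ C :=
  (abs_nonneg _).trans (hF 0 Fin.elim0)

lemma summable_poissonPMF_mul_bondAvg (hα : 0 ≤ α)
    {F : (k : ℕ) → (Fin k → Fin n × Fin n) → ℝ} {C : ℝ} (hF : ∀ k b, |F k b| ≤ C) :
    Summable fun k => poissonPMF (α * n) k * bondAvg n k (F k) :=
  ((hasSum_poissonPMF _).summable.mul_right C).of_norm_bounded fun k =>
    abs_poissonPMF_mul_bondAvg_le hα (nonneg_of_forall_abs_le hF) (hF k)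

lemma abs_quenched_le (hα : 0 ≤ α) {F : (k : ℕ) → (Fin k → Fin n × Fin n) → ℝ} {C : ℝ}
    (hF : ∀ k b, |F k b| ≤ C) : |quenched n α F| ≤ C := by
  have h := tsum_of_norm_bounded ((hasSum_poissonPMF (α * n)).mul_right C) fun k =>
    abs_poissonPMF_mul_bondAvg_le hα (nonneg_of_forall_abs_le hF) (hF k)
  rwa [one_mul, Real.norm_eq_abs] at h

lemma quenched_const_mul (c : ℝ) (F : (k : ℕ) → (Fin k → Fin n × Fin n) → ℝ) :
    quenched n α (fun k b => c * F k b) = c * quenched n α F := by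
  simp only [quenched_eq_tsum, bondAvg, ← mul_sum, ← tsum_mul_left]
  congr with k
  ring

lemma quenched_const_sub (hn : n ≠ 0) (hα : 0 ≤ α) (c : ℝ)
    {F : (k : ℕ) → (Fin k → Fin n × Fin n) → ℝ} {C : ℝ} (hF : ∀ k b, |F k b| ≤ C) :
    quenched n α (fun k b => c - F k b) = c - quenched n α F := by
  have h := ((hasSum_poissonPMF (α * n)).mul_right c).sub
    (summable_poissonPMF_mul_bondAvg hα hF).hasSum
  rw [one_mul] at h
  simp only [quenched_eq_tsum, bondAvg_const_sub hn, mul_sub]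
  exact h.tsum_eq

lemma hasSum_bondAvg {k : ℕ} {G : ℕ → (Fin k → Fin n × Fin n) → ℝ}
    {F : (Fin k → Fin n × Fin n) → ℝ} (hGF : ∀ b, HasSum (fun j => G j b) (F b)) :
    HasSum (fun j => bondAvg n k (G j)) (bondAvg n k F) :=
  (hasSum_sum fun b _ => hGF b).div_const _

lemma hasSum_quenched (hα : 0 ≤ α) {G : ℕ → (k : ℕ) → (Fin k → Fin n × Fin n) → ℝ}
    {F : (k : ℕ) → (Fin k → Fin n × Fin n) → ℝ} {u : ℕ → ℝ} (hu : Summable u)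
    (hG : ∀ j k b, |G j k b| ≤ u j) (hGF : ∀ k b, HasSum (fun j => G j k b) (F k b)) :
    HasSum (fun j => quenched n α (G j)) (quenched n α F) := by
  have hp : ∀ k, 0 ≤ poissonPMF (α * n) k := poissonPMF_nonneg (by positivity)
  have hu0 : ∀ j, 0 ≤ u j := fun j => nonneg_of_forall_abs_le (hG j)
  set f : ℕ × ℕ → ℝ := fun z => poissonPMF (α * n) z.1 * bondAvg n z.1 (G z.2 z.1)
  have hf : Summable f :=
    ((hasSum_poissonPMF _).summable.mul_of_nonneg hu hp hu0).of_norm_bounded fun z =>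
      abs_poissonPMF_mul_bondAvg_le hα (hu0 z.2) (hG z.2 z.1)
  have hrows : HasSum (fun k => poissonPMF (α * n) k * bondAvg n k (F k)) (∑' z, f z) :=
    hf.hasSum.prod_fiberwise fun k => (hasSum_bondAvg (hGF k)).mul_left _
  have hcols : HasSum (fun j => quenched n α (G j)) (∑' z, f (Equiv.prodComm ℕ ℕ z)) :=
    (hf.comp_injective (Equiv.prodComm ℕ ℕ).injective).hasSum.prod_fiberwise fun j =>
      (summable_poissonPMF_mul_bondAvg hα (hG j)).hasSum
  rwa [(Equiv.prodComm ℕ ℕ).tsum_eq f, ← hrows.tsum_eq] at hcols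

/-- Size biasing of the Poisson law, `E[K f(K)] = λ E[f(K + 1)]`, for the bond number. -/
lemma quenched_eq_mul_quenched_of_sum_succ (α : ℝ)
    {G : (k : ℕ) → (Fin k → Fin n × Fin n) → ℝ}
    {H : (k : ℕ) → (Fin k → Fin n × Fin n) → Fin n × Fin n → ℝ}
    (hG0 : G 0 Fin.elim0 = 0) (hG : ∀ k, ∑ b, G (k + 1) b = (k + 1) * ∑ b, ∑ x, H k b x) :
    quenched n α G = α * n * quenched n α (fun k b => (∑ x, H k b x) / (n : ℝ) ^ 2) := by
  set f := fun k => poissonPMF (α * n) k * bondAvg n k (G k)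
  have hf0 : f 0 = 0 := by simp [f, bondAvg, Unique.eq_default Fin.elim0 ▸ hG0]
  have hshift : ∑' k, f (k + 1) = ∑' k, f k :=
    Nat.succ_injective.tsum_eq fun k hk => by
      rcases k with _ | k
      · exact absurd hf0 hk
      · exact ⟨k, rfl⟩
  rw [quenched_eq_tsum, quenched_eq_tsum, ← hshift, ← tsum_mul_left]
  congr with k
  simp only [f, bondAvg, hG, ← sum_div, pow_succ]
  linear_combination ((∑ b, ∑ x, H k b x) / (((n : ℝ) ^ 2) ^ k * (n : ℝ) ^ 2)) *
    poissonPMF_succ_mul (α * n) k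

lemma hasDerivAt_quenched (hα : 0 ≤ α) {F F' : (k : ℕ) → (Fin k → Fin n × Fin n) → ℝ → ℝ}
    (hF : ∀ k b y, HasDerivAt (F k b) (F' k b y) y) (hF' : ∀ k b y, |F' k b y| ≤ k)
    {y₀ C : ℝ} (hF₀ : ∀ k b, |F k b y₀| ≤ C) (y : ℝ) :
    HasDerivAt (fun y => quenched n α fun k b => F k b y)
      (quenched n α fun k b => F' k b y) y := by
  have hderiv : ∀ k y, HasDerivAt (fun y => poissonPMF (α * n) k * bondAvg n k (F k · y))
      (poissonPMF (α * n) k * bondAvg n k (F' k · y)) y := fun k y =>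
    ((HasDerivAt.fun_sum fun b _ => hF k b y).div_const _).const_mul _
  have hbound : ∀ k y, ‖poissonPMF (α * n) k * bondAvg n k (F' k · y)‖ ≤
      poissonPMF (α * n) k * k := fun k y =>
    abs_poissonPMF_mul_bondAvg_le hα k.cast_nonneg fun b => hF' k b y
  exact hasDerivAt_tsum (summable_poissonPMF_mul_cast (α * n)) hderiv hbound
    (summable_poissonPMF_mul_bondAvg hα hF₀) y

end Quenched

section Expansion

lemma hasSum_sub_div_one_add_mul {θ w : ℝ} (h : |θ * w| < 1) :
    HasSum (fun j : ℕ => (-1 : ℝ) ^ (j + 1) * (1 - θ ^ 2) * θ ^ j * w ^ (j + 1))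
      (θ - (w + θ) / (1 + θ * w)) := by
  have hnorm : ‖-(θ * w)‖ < 1 := by rwa [norm_neg, Real.norm_eq_abs]
  have hden : 1 + θ * w ≠ 0 := by linarith [(abs_lt.1 h).1]
  have hsum : θ - (w + θ) / (1 + θ * w) = -(1 - θ ^ 2) * w * (1 - -(θ * w))⁻¹ := by
    rw [sub_neg_eq_add]
    field_simp
    ring
  rw [hsum]
  refine ((hasSum_geometric_of_norm_lt_one hnorm).mul_left _).congr_fun fun j => ?_
  rw [neg_pow (θ * w), mul_pow]
  ring

lemma abs_neg_one_pow_mul_le {θ w : ℝ} (hθ : |θ| < 1) (hw : |w| ≤ 1) (j : ℕ) :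
    |(-1 : ℝ) ^ (j + 1) * (1 - θ ^ 2) * θ ^ j * w| ≤ (1 - θ ^ 2) * |θ| ^ j := by
  have hθ2 : 0 ≤ 1 - θ ^ 2 := by nlinarith [sq_abs θ, abs_nonneg θ]
  rw [abs_mul, abs_mul, abs_mul, abs_pow, abs_neg, abs_one, one_pow, one_mul,
    abs_of_nonneg hθ2, abs_pow]
  exact mul_le_of_le_one_right (by positivity) hw

lemma summable_one_sub_sq_mul_abs_pow {θ : ℝ} (hθ : |θ| < 1) :
    Summable fun j : ℕ => (1 - θ ^ 2) * |θ| ^ j :=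
  (summable_geometric_of_lt_one (abs_nonneg θ) hθ).mul_left _

end Expansion

section MultiOverlap

variable {n k : ℕ}

/-- `ω(σᵢσⱼ)ᵐ` is the `m`-replica Gibbs average of `(σᵢ¹⋯σᵢᵐ)(σⱼ¹⋯σⱼᵐ)`, so this is `q²_{1…m}`
at a fixed realization. -/
noncomputable def sqMultiOverlap (n : ℕ) (β : ℝ) (m : ℕ) {k : ℕ} (b : Fin k → Fin n × Fin n) :
    ℝ :=
  1 / (n : ℝ) ^ 2 * ∑ i : Fin n, ∑ j : Fin n, (gibbs n β b (fun σ => (σ i : ℝ) * σ j)) ^ m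

lemma card_pairs (n : ℕ) : (Fintype.card (Fin n × Fin n) : ℝ) = (n : ℝ) ^ 2 := by
  simp [sq]

lemma abs_sqMultiOverlap_le_one (β : ℝ) (m : ℕ) (b : Fin k → Fin n × Fin n) :
    |sqMultiOverlap n β m b| ≤ 1 := by
  have h := abs_sum_div_card_le zero_le_one
    (F := fun x : Fin n × Fin n => (gibbs n β b fun σ => (σ x.1 : ℝ) * σ x.2) ^ m) fun x => by
      rw [abs_pow]
      exact pow_le_one₀ (abs_nonneg _) (abs_gibbs_spin_mul_spin_le_one β b x.1 x.2)
  rwa [card_pairs, Fintype.sum_prod_type, div_eq_inv_mul, ← one_div] at h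

lemma Zdil_zero (b : Fin k → Fin n × Fin n) : Zdil n 0 b = Fintype.card (Conf n) := by
  simp [Zdil]

lemma hasDerivAt_quenched_log_Zdil {α : ℝ} (hα : 0 ≤ α) (β : ℝ) :
    HasDerivAt (fun β' => quenched n α fun _ b => log (Zdil n β' b))
      (quenched n α fun _ b => gibbs n β b fun σ => -Hdil b σ) β :=
  hasDerivAt_quenched hα (fun _ b y => hasDerivAt_log_Zdil y b)
    (fun _ b y => abs_gibbs_le y b fun σ => (abs_neg (Hdil b σ)).trans_le (abs_Hdil_le b σ))
    (y₀ := 0) (fun _ b => (congrArg (|log ·|) (Zdil_zero b)).le) β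

lemma quenched_gibbs_neg_Hdil (α β : ℝ) :
    quenched n α (fun _ b => gibbs n β b fun σ => -Hdil b σ) =
      α * n * quenched n α (fun _ b =>
        (∑ x, gibbs n β (Fin.cons x b) fun σ => (σ x.1 : ℝ) * σ x.2) / (n : ℝ) ^ 2) :=
  quenched_eq_mul_quenched_of_sum_succ α (by simp [Hdil, gibbs]) (sum_gibbs_neg_Hdil_succ β)

lemma hasSum_sqMultiOverlap (hn : n ≠ 0) (β : ℝ) (b : Fin k → Fin n × Fin n) :
    HasSum (fun j : ℕ => (-1 : ℝ) ^ (j + 1) * (1 - tanh β ^ 2) * tanh β ^ j *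
        sqMultiOverlap n β (j + 1) b)
      (tanh β - (∑ x, gibbs n β (Fin.cons x b) fun σ => (σ x.1 : ℝ) * σ x.2) / (n : ℝ) ^ 2) := by
  have hbond : ∀ x : Fin n × Fin n, HasSum
      (fun j : ℕ => (-1 : ℝ) ^ (j + 1) * (1 - tanh β ^ 2) * tanh β ^ j *
        (gibbs n β b fun σ => (σ x.1 : ℝ) * σ x.2) ^ (j + 1))
      (tanh β - gibbs n β (Fin.cons x b) fun σ => (σ x.1 : ℝ) * σ x.2) := fun x => by
    rw [gibbs_cons_spin_mul_spin]
    refine hasSum_sub_div_one_add_mul ?_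
    rw [abs_mul]
    exact mul_lt_one_of_nonneg_of_lt_one_left (abs_nonneg _) (abs_tanh_lt_one β)
      (abs_gibbs_spin_mul_spin_le_one β b x.1 x.2)
  have hsum : tanh β - (∑ x, gibbs n β (Fin.cons x b) fun σ => (σ x.1 : ℝ) * σ x.2) / (n : ℝ) ^ 2
      = 1 / (n : ℝ) ^ 2 *
        ∑ x, (tanh β - gibbs n β (Fin.cons x b) fun σ => (σ x.1 : ℝ) * σ x.2) := by
    have hn2 : (n : ℝ) ^ 2 ≠ 0 := by positivity
    rw [sum_sub_distrib, sum_const, card_univ, nsmul_eq_mul, card_pairs]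
    field_simp
  rw [hsum]
  refine ((hasSum_sum fun x _ => hbond x).mul_left _).congr_fun fun j => ?_
  simp only [sqMultiOverlap, Fintype.sum_prod_type, mul_sum]
  exact sum_congr rfl fun i _ => sum_congr rfl fun j _ => by ring

lemma quenched_sum_gibbs_cons_eq (hn : n ≠ 0) {α : ℝ} (hα : 0 ≤ α) (β : ℝ) :
    quenched n α (fun _ b =>
        (∑ x, gibbs n β (Fin.cons x b) fun σ => (σ x.1 : ℝ) * σ x.2) / (n : ℝ) ^ 2) =
      tanh β - ∑' j : ℕ, (-1 : ℝ) ^ (j + 1) * (1 - tanh β ^ 2) * tanh β ^ j *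
        quenched n α (fun _ b => sqMultiOverlap n β (j + 1) b) := by
  have hbound : ∀ (k : ℕ) (b : Fin k → Fin n × Fin n),
      |(∑ x, gibbs n β (Fin.cons x b) fun σ => (σ x.1 : ℝ) * σ x.2) / (n : ℝ) ^ 2| ≤ 1 :=
    fun _ b => by
      simpa only [card_pairs] using abs_sum_div_card_le zero_le_one fun x =>
        abs_gibbs_spin_mul_spin_le_one β (Fin.cons x b) x.1 x.2
  have h := hasSum_quenched hα (summable_one_sub_sq_mul_abs_pow (abs_tanh_lt_one β))
    (fun j _ b => abs_neg_one_pow_mul_le (abs_tanh_lt_one β) (abs_sqMultiOverlap_le_one β _ b) j)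
    fun _ b => hasSum_sqMultiOverlap hn β b
  rw [quenched_const_sub hn hα _ hbound] at h
  simp only [quenched_const_mul] at h
  rw [h.tsum_eq]
  ring

end MultiOverlap

theorem pressure_beta_derivative_overlap_expansion_general (N : ℕ) (hN : 1 ≤ N)
    (α : ℝ) (hα : 1 / 2 < α) (β : ℝ) (θ : ℝ) (hθ : θ = Real.tanh β)
    (q : ℕ → ℝ)
    (hq : ∀ m : ℕ, q m = quenched N α (fun _ b =>
      (1 / (N : ℝ) ^ 2) * ∑ i : Fin N, ∑ j : Fin N,
        (gibbs N β b (fun σ => (σ i : ℝ) * (σ j : ℝ))) ^ m)) :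
    Summable (fun j : ℕ =>
        |(-1 : ℝ) ^ (j + 1) * (1 - θ ^ 2) * θ ^ j * q (j + 1)|) ∧
    HasDerivAt (fun β' : ℝ =>
        (1 / (N : ℝ)) * quenched N α (fun _ b => Real.log (Zdil N β' b)))
      (α * θ - α * ∑' j : ℕ, (-1 : ℝ) ^ (j + 1) * (1 - θ ^ 2) * θ ^ j * q (j + 1))
      β := by
  subst hθ
  have hN0 : N ≠ 0 := by omega
  have hα0 : 0 ≤ α := by linarith
  have hq' : ∀ m, q m = quenched N α fun _ b => sqMultiOverlap N β m b := hq
  refine ⟨(summable_one_sub_sq_mul_abs_pow (abs_tanh_lt_one β)).of_nonneg_of_le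
    (fun _ => abs_nonneg _) fun j => abs_neg_one_pow_mul_le (abs_tanh_lt_one β)
      (hq' _ ▸ abs_quenched_le hα0 fun _ b => abs_sqMultiOverlap_le_one β _ b) j, ?_⟩
  have h := (hasDerivAt_quenched_log_Zdil (n := N) hα0 β).const_mul (1 / (N : ℝ))
  rw [quenched_gibbs_neg_Hdil, quenched_sum_gibbs_cons_eq hN0 hα0] at h
  simp only [hq']
  refine h.congr_deriv ?_
  rw [← mul_assoc, show 1 / (N : ℝ) * (α * N) = α by field_simp, mul_sub]

/-- **Multi-overlap expansion of the `β`-derivative of the quenched pressure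
(finite `N`, exact form).** With `θ = tanh β` and
`⟨q²_{1,…,m}⟩ = E[(1/N²) Σ_{i,j} (ω(σ_iσ_j))^m]` (the series below being indexed by
`m = j + 1`), the series `Σ_{m≥1} (-1)^m (1-θ²) θ^{m-1} ⟨q²_{1,…,m}⟩` converges
absolutely and
`∂A_N(α,β)/∂β = αθ − α·Σ_{m≥1} (-1)^m (1-θ²) θ^{m-1} ⟨q²_{1,…,m}⟩`. -/
theorem pressure_beta_derivative_overlap_expansion (N : ℕ) (hN : 1 ≤ N)
    (α : ℝ) (hα : 1 / 2 < α) (β : ℝ) (hβ : 0 ≤ β) (θ : ℝ) (hθ : θ = Real.tanh β)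
    (q : ℕ → ℝ)
    (hq : ∀ m : ℕ, q m = quenched N α (fun _ b =>
      (1 / (N : ℝ) ^ 2) * ∑ i : Fin N, ∑ j : Fin N,
        (gibbs N β b (fun σ => (σ i : ℝ) * (σ j : ℝ))) ^ m)) :
    Summable (fun j : ℕ =>
        |(-1 : ℝ) ^ (j + 1) * (1 - θ ^ 2) * θ ^ j * q (j + 1)|) ∧
    HasDerivAt (fun β' : ℝ =>
        (1 / (N : ℝ)) * quenched N α (fun _ b => Real.log (Zdil N β' b)))
      (α * θ - α * ∑' j : ℕ, (-1 : ℝ) ^ (j + 1) * (1 - θ ^ 2) * θ ^ j * q (j + 1))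
      β :=
  pressure_beta_derivative_overlap_expansion_general N hN α hα β θ hθ q hq
end
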